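/- In the sequent calculus for propositional Core logic, the sequent ¬A, A ⊢ B is not derivable when A and B are distinct propositional variables (the First Lewis Paradox fails in Core logic). -/
import Mathlib


inductive Form : Type where
  | var : Nat → Form
  | neg : Form → Form
  | conj : Form → Form → Form
  | disj : Form → Form → Form
  | imp : Form → Form → Form
deriving DecidableEq

open Form

/-- Sequent calculus for propositional Core logic (Tennant).
Contexts are finite sets of formulas; the conclusion is `some C` or `none`
(the empty / absurdity conclusion ⊥). -/
inductive Core : Finset Form → Option Form → Prop where
  | ax (A : Form) : Core {A} (some A)
  | lneg {Δ : Finset Form} {A : Form} :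
      Core Δ (some A) → Core (insert (Form.neg A) Δ) none
  | rneg {Δ : Finset Form} {A : Form} :
      Core (insert A Δ) none → Core Δ (some (Form.neg A))
  | landL {Δ : Finset Form} {x : Option Form} (A B : Form) :
      Core Δ x → (Δ ∩ {A, B}).Nonempty →
      Core (insert (Form.conj A B) (Δ \ {A, B})) x
  | randR {Δ Γ : Finset Form} {A B : Form} :
      Core Δ (some A) → Core Γ (some B) → Core (Δ ∪ Γ) (some (Form.conj A B))
  | lor {Δ Γ : Finset Form} {A B : Form} {x y z : Option Form} :
      Core (insert A Δ) x → Core (insert B Γ) y →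
      ((x = z ∧ (y = z ∨ y = none)) ∨ (y = z ∧ x = none)) →
      Core (insert (Form.disj A B) (Δ ∪ Γ)) z
  | ror1 {Δ : Finset Form} {A : Form} (B : Form) :
      Core Δ (some A) → Core Δ (some (Form.disj A B))
  | ror2 {Δ : Finset Form} {B : Form} (A : Form) :
      Core Δ (some B) → Core Δ (some (Form.disj A B))
  | limp {Δ Γ : Finset Form} {A B : Form} {x : Option Form} :
      Core Δ (some A) → Core (insert B Γ) x →
      Core (insert (Form.imp A B) (Δ ∪ Γ)) x
  | rimpa {Δ : Finset Form} {A : Form} (B : Form) :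
      Core (insert A Δ) none → Core Δ (some (Form.imp A B))
  | rimpb {Δ : Finset Form} {B : Form} (A : Form) :
      Core Δ (some B) → Core (Δ \ {A}) (some (Form.imp A B))

/-- the First Lewis Paradox ¬A, A ⊢ B is not Core-derivable
for distinct propositional variables A, B. -/
theorem core_no_lewis (p q : Nat) (h : p ≠ q) :
    ¬ Core ({Form.neg (Form.var p), Form.var p} : Finset Form)
        (some (Form.var q)) := by
  intro hd
  generalize hS : ({Form.neg (Form.var p), Form.var p} : Finset Form) = S at hd
  generalize hx : (some (Form.var q) : Option Form) = x at hd
  cases hd <;>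
    simp only [Finset.ext_iff, Finset.mem_insert, Finset.mem_singleton,
      Finset.mem_union, Finset.mem_sdiff] at hS
  any_goals simp_all
  all_goals
  · have h2 := (hS _).mpr (by first | exact Or.inl rfl | exact rfl)
    rcases h2 with h2 | h2 <;> simp_all
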